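/- arXiv:1408.6220 — 2 statements merged into one kernel-verified Lean document; each statement's English description precedes it below -/
import Mathlib

section
/- Let m, q, b be positive integers with q ≡ 1 (mod m) and b < q (so that m divides b(q−1)). Write b·(q−1)/m = b⁽¹⁾·q + b⁽⁰⁾ with 0 ≤ b⁽⁰⁾ < q and 0 ≤ b⁽¹⁾ < q (the q-adic expansion). Then b⁽¹⁾ + b⁽⁰⁾ < q, and consequently b·(q²−1)/m = b⁽¹⁾·q² + (b⁽¹⁾+b⁽⁰⁾)·q + b⁽⁰⁾ is the q-adic expansion of b·(q²−1)/m. Moreover, if ε is the adjusted remainder of b modulo m (the unique integer with 1 ≤ ε ≤ m and b ≡ ε (mod m)), and b = t·m + ε, then b⁽¹⁾ = t and b⁽⁰⁾ = (q·ε − b)/m. -/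
/-!
Write `q - 1 = m * k`. Cancelling `m`, the hypothesis says that `b * k` has the `q`-digits
`b1, b0`. For `b = t * m + ε` one has `b * k = t * q + (ε * k - t)`, and `b < q` forces `t ≤ k`,
so `0 ≤ ε * k - t` and `ε * k ≤ m * k < q`: this is the `q`-adic expansion of `b * k`, whence
`b1 = t` and `b1 + b0 = ε * k < q`. The expansion of `b * (q ^ 2 - 1) / m` is that of
`b * (q - 1) / m` multiplied by `q + 1`, which has no carries as soon as `b1 + b0 < q`.
-/

theorem Nat.eq_and_eq_of_mul_add_eq_mul_add {q a r a' r' : ℕ} (hr : r < q) (hr' : r' < q)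
    (h : a * q + r = a' * q + r') : a = a' ∧ r = r' := by
  have hq : 0 < q := by omega
  obtain ⟨hdiv, hmod⟩ := (Nat.div_mod_unique hq).mpr ⟨(by rw [h]; ring : r' + q * a' = a * q + r), hr'⟩
  obtain ⟨hdiv', hmod'⟩ := (Nat.div_mod_unique hq).mpr ⟨(by ring : r + q * a = a * q + r), hr⟩
  exact ⟨hdiv'.symm.trans hdiv, hmod'.symm.trans hmod⟩

theorem mul_sq_sub_one_eq_of_mul_sub_one_eq {b q N m : ℕ} (h : b * (q - 1) = N * m) :
    b * (q ^ 2 - 1) = N * (q + 1) * m := by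
  calc b * (q ^ 2 - 1) = b * (q - 1) * (q + 1) := by
        rw [← one_pow 2, Nat.sq_sub_sq, one_pow]; ring
    _ = N * (q + 1) * m := by rw [h]; ring

theorem qadic_digits_of_adjusted_remainder {m k t ε b1 b0 : ℕ} (hε1 : 1 ≤ ε) (hεm : ε ≤ m)
    (hbq : t * m + ε < m * k + 1) (hb0 : b0 < m * k + 1)
    (hdig : (t * m + ε) * k = b1 * (m * k + 1) + b0) :
    b1 = t ∧ b1 + b0 = ε * k := by
  have hm : 0 < m := by omega
  have htk : t ≤ k := Nat.le_of_mul_le_mul_right (by nlinarith : t * m ≤ k * m) hm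
  have htεk : t ≤ ε * k := htk.trans (Nat.le_mul_of_pos_left k hε1)
  have hεk : ε * k < m * k + 1 := Nat.lt_succ_of_le (Nat.mul_le_mul_right k hεm)
  have hexp : b1 * (m * k + 1) + b0 = t * (m * k + 1) + (ε * k - t) := by
    rw [← hdig]; zify [htεk]; ring
  obtain ⟨rfl, rfl⟩ := Nat.eq_and_eq_of_mul_add_eq_mul_add hb0 (by omega) hexp
  omega

theorem stmt0_general (m q b : ℕ)
    (hmod : q ≡ 1 [MOD m]) (hbq : b < q)
    (b1 b0 : ℕ) (hb0 : b0 < q)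
    (hexp : b * (q - 1) = (b1 * q + b0) * m)
    (ε t : ℕ) (hε1 : 1 ≤ ε) (hεm : ε ≤ m) (hbt : b = t * m + ε) :
    b1 + b0 < q ∧
    b * (q ^ 2 - 1) = (b1 * q ^ 2 + (b1 + b0) * q + b0) * m ∧
    b1 = t ∧
    m * b0 = q * ε - b := by
  obtain ⟨k, hk⟩ : m ∣ q - 1 := (Nat.modEq_iff_dvd' (by omega)).mp hmod.symm
  have hq : q = m * k + 1 := by omega
  have hdig : b * k = b1 * q + b0 :=
    Nat.eq_of_mul_eq_mul_right (by omega : 0 < m) (by rw [← hexp, hk]; ring)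
  subst hq hbt
  obtain ⟨rfl, hsum⟩ := qadic_digits_of_adjusted_remainder hε1 hεm hbq hb0 hdig
  have hεq : m * b0 + (b1 * m + ε) = (m * k + 1) * ε := by
    calc m * b0 + (b1 * m + ε) = m * (b1 + b0) + ε := by ring
      _ = (m * k + 1) * ε := by rw [hsum]; ring
  refine ⟨?_, ?_, rfl, by omega⟩
  · rw [hsum]; exact Nat.lt_succ_of_le (Nat.mul_le_mul_right k hεm)
  · rw [mul_sq_sub_one_eq_of_mul_sub_one_eq hexp]; ring

/--
Lemma on `q`-adic expansions.
Let `m, q, b` be positive integers with `q ≡ 1 (mod m)` and `b < q` (so that `m` divides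
`b * (q - 1)`).  Write `b * (q-1) / m = b1 * q + b0` in `q`-adic expansion (i.e. the
hypotheses assert `b * (q - 1) = (b1 * q + b0) * m` with digits `b0, b1 < q`).
Then `b1 + b0 < q`, and consequently
`b * (q^2 - 1) / m = b1 * q^2 + (b1 + b0) * q + b0` is the `q`-adic expansion of
`b * (q^2-1)/m`.  Moreover, if `ε` is the adjusted remainder of `b` modulo `m`
(`1 ≤ ε ≤ m`, `b ≡ ε (mod m)`) and `b = t * m + ε`, then `b1 = t` and `b0 = (q * ε - b)/m`,
i.e. `m * b0 = q * ε - b`.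
-/
theorem stmt0 (m q b : ℕ) (hm : 0 < m) (hq : 0 < q) (hb : 0 < b)
    (hmod : q ≡ 1 [MOD m]) (hbq : b < q)
    (b1 b0 : ℕ) (hb1 : b1 < q) (hb0 : b0 < q)
    (hexp : b * (q - 1) = (b1 * q + b0) * m)
    (ε t : ℕ) (hε1 : 1 ≤ ε) (hεm : ε ≤ m) (hbt : b = t * m + ε) :
    b1 + b0 < q ∧
    b * (q ^ 2 - 1) = (b1 * q ^ 2 + (b1 + b0) * q + b0) * m ∧
    b1 = t ∧
    m * b0 = q * ε - b :=
  stmt0_general m q b hmod hbq b1 b0 hb0 hexp ε t hε1 hεm hbt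
end

section
/- Let q > 1, and define the q-adic trace tr_q(a) of a nonnegative integer a as the sum of its q-adic digits. If m ≥ 1, q ≡ 1 (mod m), and 0 < b < q has adjusted remainder ε modulo m (1 ≤ ε ≤ m, b ≡ ε mod m), then tr_q(b·(q−1)/m) = ε·(q−1)/m, and moreover tr_q(b·(q²−1)/m) = 2·tr_q(b·(q−1)/m). -/
/-!
Write `q - 1 = m * d` and `b = ε + m * t`; then `0 ≤ t < d`, and
`b * (q - 1) / m = b * d = (ε * d - t) + q * t` has the two `q`-adic digits `ε * d - t` and `t`,
whose sum is `ε * d ≤ q - 1`. Multiplying by `q + 1` adds the number to its own shift; since the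
digit sum `ε * d` is below `q` there is no carry, so the digits become `ε * d - t, ε * d, t` and the
trace doubles.
-/

/-- The `q`-adic trace of a natural number: the sum of its `q`-adic digits. -/
def qTrace (q a : ℕ) : ℕ := (Nat.digits q a).sum

theorem qTrace_of_lt {q a : ℕ} (h : a < q) : qTrace q a = a := by
  rcases Nat.eq_zero_or_pos a with rfl | ha
  · simp [qTrace]
  · simp [qTrace, Nat.digits_of_lt q a ha.ne' h]

theorem qTrace_add_mul {q r s : ℕ} (hq : 1 < q) (hr : r < q) :
    qTrace q (r + q * s) = r + qTrace q s := by
  by_cases h : r = 0 ∧ s = 0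
  · obtain ⟨rfl, rfl⟩ := h
    simp [qTrace]
  · rw [qTrace, Nat.digits_add q hq r s hr (by tauto), List.sum_cons, qTrace]

theorem qTrace_add_mul_of_add_lt {q c t : ℕ} (hq : 1 < q) (h : c + t < q) :
    qTrace q (c + q * t) = c + t := by
  rw [qTrace_add_mul hq (by omega), qTrace_of_lt (by omega)]

theorem qTrace_add_mul_mul_succ_of_add_lt {q c t : ℕ} (hq : 1 < q) (h : c + t < q) :
    qTrace q ((c + q * t) * (q + 1)) = 2 * (c + t) := by
  have hdigits : (c + q * t) * (q + 1) = c + q * ((c + t) + q * t) := by ring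
  rw [hdigits, qTrace_add_mul hq (by omega), qTrace_add_mul hq h, qTrace_of_lt (by omega)]
  ring

theorem Nat.ModEq.exists_eq_add_mul_of_pos {m b ε : ℕ} (h : b ≡ ε [MOD m]) (hb : 0 < b)
    (hε : ε ≤ m) : ∃ t, b = ε + m * t := by
  have hεb : ε ≤ b := by
    by_contra! hlt
    have hbm : b % m = b := Nat.mod_eq_of_lt (by omega)
    rcases hε.eq_or_lt with rfl | hεm
    · have : b % ε = 0 := by rw [h, Nat.mod_self]
      omega
    · have : b % m = ε := by rw [h, Nat.mod_eq_of_lt hεm]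
      omega
  obtain ⟨t, ht⟩ := h.symm.dvd'
  exact ⟨t, by omega⟩

theorem stmt1_general (q m b ε : ℕ) (hq : 1 < q) (hmod : q ≡ 1 [MOD m])
    (hb0 : 0 < b) (hbq : b < q) (hε1 : 1 ≤ ε) (hεm : ε ≤ m) (hbε : b ≡ ε [MOD m]) :
    qTrace q (b * (q - 1) / m) = ε * (q - 1) / m ∧
    qTrace q (b * (q ^ 2 - 1) / m) = 2 * qTrace q (b * (q - 1) / m) := by
  obtain ⟨d, hd⟩ := hmod.symm.dvd'
  obtain ⟨t, hb⟩ := hbε.exists_eq_add_mul_of_pos hb0 hεm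
  have hm : 0 < m := Nat.pos_of_ne_zero fun h => by simp [h] at hd; omega
  have htd : t < d := Nat.lt_of_mul_lt_mul_left (a := m) (by omega)
  obtain ⟨c, hc⟩ : ∃ c, ε * d = c + t := by
    have := Nat.le_mul_of_pos_left d hε1
    exact ⟨ε * d - t, by omega⟩
  have hct : c + t < q := by
    have := Nat.mul_le_mul_right d hεm
    omega
  have hq' : q = m * d + 1 := by omega
  have hlow : b * (q - 1) / m = c + q * t := by
    refine Nat.div_eq_of_eq_mul_left hm ?_
    rw [hd, hb, hq']
    linear_combination m * hc
  have hhigh : b * (q ^ 2 - 1) / m = (c + q * t) * (q + 1) := by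
    refine Nat.div_eq_of_eq_mul_left hm ?_
    have hsq : q ^ 2 - 1 = (q - 1) * (q + 1) := by simpa [mul_comm] using Nat.sq_sub_sq q 1
    rw [hsq, hd, hb, hq']
    linear_combination m * (m * d + 2) * hc
  have hε : ε * (q - 1) / m = c + t := by
    rw [hd, ← hc, mul_left_comm, Nat.mul_div_cancel_left _ hm]
  rw [hlow, hhigh, hε, qTrace_add_mul_of_add_lt hq hct, qTrace_add_mul_mul_succ_of_add_lt hq hct]
  exact ⟨rfl, rfl⟩

/--
Let `q > 1`, `m ≥ 1` with `q ≡ 1 (mod m)`, and let `0 < b < q` have adjusted remainder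
`ε` modulo `m` (i.e. `1 ≤ ε ≤ m` and `b ≡ ε (mod m)`).  Then the `q`-adic trace of
`b * (q-1)/m` equals `ε * (q-1)/m`, and the `q`-adic trace of `b * (q^2-1)/m` is twice
the `q`-adic trace of `b * (q-1)/m`.
-/
theorem stmt1 (q m b ε : ℕ) (hq : 1 < q) (hm : 1 ≤ m) (hmod : q ≡ 1 [MOD m])
    (hb0 : 0 < b) (hbq : b < q) (hε1 : 1 ≤ ε) (hεm : ε ≤ m) (hbε : b ≡ ε [MOD m]) :
    qTrace q (b * (q - 1) / m) = ε * (q - 1) / m ∧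
    qTrace q (b * (q ^ 2 - 1) / m) = 2 * qTrace q (b * (q - 1) / m) :=
  stmt1_general q m b ε hq hmod hb0 hbq hε1 hεm hbε
end
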